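/- arXiv:1309.5096 — 2 statements merged into one kernel-verified Lean document; each statement's English description precedes it below -/
import Mathlib

section
/- Let k be a field of characteristic zero. Define operators on Laurent polynomials k[x₁^{±1}, x₂^{±1}]: E₁ = (1/2)(x₁^{-1}∂₁ + x₂^{-1}∂₂) - (1/4)(x₁^{-2}(1-ξ₁) + x₂^{-2}(1-ξ₂)) and E₂ = (1/2)(x₁ + x₂ - x₁ξ₁ - x₂ξ₂), where ∂ᵢ is partial differentiation in xᵢ and ξᵢ negates xᵢ. Then the commutator [E₁, E₂] is nonzero and commutes with both E₁ and E₂; in particular the Lie algebra generated by E₁ and E₂ is isomorphic to the 3-dimensional Heisenberg Lie algebra. -/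
open Finsupp

set_option maxHeartbeats 1000000 in
/-- On Laurent polynomials k[x₁^{±1},x₂^{±1}] (modelled on the
basis of monomials x₁^j x₂^ℓ, (j,ℓ) ∈ ℤ×ℤ), consider
E₁ = (1/2)(x₁⁻¹∂₁ + x₂⁻¹∂₂) - (1/4)(x₁⁻²(1-ξ₁) + x₂⁻²(1-ξ₂)) and
E₂ = (1/2)(x₁ + x₂ - x₁ξ₁ - x₂ξ₂), whose actions on the monomial x₁^j x₂^ℓ are
E₁ : (j/2 - [j odd]/2)·x₁^{j-2}x₂^ℓ + (ℓ/2 - [ℓ odd]/2)·x₁^j x₂^{ℓ-2} and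
E₂ : [j odd]·x₁^{j+1}x₂^ℓ + [ℓ odd]·x₁^j x₂^{ℓ+1}.
Then [E₁,E₂] ≠ 0 and [E₁,E₂] commutes with E₁ and with E₂ (so the Lie algebra
generated by E₁, E₂ is a Heisenberg Lie algebra). -/
theorem stmt_8 (k : Type*) [Field k] [CharZero k]
    (E₁ E₂ : ((ℤ × ℤ) →₀ k) →ₗ[k] ((ℤ × ℤ) →₀ k))
    (hE₁ : ∀ j ℓ : ℤ, E₁ (single (j, ℓ) 1) =
      ((j : k) / 2 - if Odd j then (2 : k)⁻¹ else 0) • single (j - 2, ℓ) 1 +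
      ((ℓ : k) / 2 - if Odd ℓ then (2 : k)⁻¹ else 0) • single (j, ℓ - 2) 1)
    (hE₂ : ∀ j ℓ : ℤ, E₂ (single (j, ℓ) 1) =
      (if Odd j then (1 : k) else 0) • single (j + 1, ℓ) 1 +
      (if Odd ℓ then (1 : k) else 0) • single (j, ℓ + 1) 1) :
    E₁ ∘ₗ E₂ - E₂ ∘ₗ E₁ ≠ 0 ∧
    (E₁ ∘ₗ E₂ - E₂ ∘ₗ E₁) ∘ₗ E₁ - E₁ ∘ₗ (E₁ ∘ₗ E₂ - E₂ ∘ₗ E₁) = 0 ∧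
    (E₁ ∘ₗ E₂ - E₂ ∘ₗ E₁) ∘ₗ E₂ - E₂ ∘ₗ (E₁ ∘ₗ E₂ - E₂ ∘ₗ E₁) = 0 := by
  have par : ∀ n s : ℤ, Odd (n + s) ↔ (Odd n ↔ ¬ Odd s) := by
    intro n s; rw [Int.odd_iff, Int.odd_iff, Int.odd_iff]; omega
  have key1 : ∀ j ℓ : ℤ,
      E₁ (E₂ (E₁ (single (j, ℓ) 1))) - E₂ (E₁ (E₁ (single (j, ℓ) 1))) -
      (E₁ (E₁ (E₂ (single (j, ℓ) 1))) - E₁ (E₂ (E₁ (single (j, ℓ) 1)))) = 0 := by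
    intro j ℓ
    rw [hE₁ j ℓ, hE₂ j ℓ]
    simp only [map_add, map_smul, hE₁, hE₂]
    obtain hj | hj := em (Odd j) <;> obtain hl | hl := em (Odd ℓ) <;>
      simp only [sub_eq_add_neg, par, hj, hl,
        (by decide : ¬ Odd (-2:ℤ)), (by decide : Odd (1:ℤ)), (by decide : Odd (-1:ℤ)),
        iff_true, iff_false, not_true, not_false_iff, not_not, if_true, if_false,
        ite_true, ite_false, zero_smul, smul_zero, add_zero, zero_add, one_smul,
        smul_add, smul_smul] <;>
      (push_cast; ring_nf; module)
  have key2 : ∀ j ℓ : ℤ,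
      E₁ (E₂ (E₂ (single (j, ℓ) 1))) - E₂ (E₁ (E₂ (single (j, ℓ) 1))) -
      (E₂ (E₁ (E₂ (single (j, ℓ) 1))) - E₂ (E₂ (E₁ (single (j, ℓ) 1)))) = 0 := by
    intro j ℓ
    rw [hE₁ j ℓ, hE₂ j ℓ]
    simp only [map_add, map_smul, hE₁, hE₂]
    obtain hj | hj := em (Odd j) <;> obtain hl | hl := em (Odd ℓ) <;>
      simp only [sub_eq_add_neg, par, hj, hl,
        (by decide : ¬ Odd (-2:ℤ)), (by decide : Odd (1:ℤ)), (by decide : Odd (-1:ℤ)),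
        iff_true, iff_false, not_true, not_false_iff, not_not, if_true, if_false,
        ite_true, ite_false, zero_smul, smul_zero, add_zero, zero_add, one_smul,
        smul_add, smul_smul] <;>
      (push_cast; ring_nf; module)
  refine ⟨?_, ?_, ?_⟩
  · intro h
    have := congrArg (fun f => f (single ((1:ℤ), (0:ℤ)) (1:k))) h
    simp only [LinearMap.sub_apply, LinearMap.comp_apply, LinearMap.zero_apply] at this
    rw [hE₂ 1 0, hE₁ 1 0] at this
    norm_num at this
    rw [hE₁ 2 0] at this
    norm_num at this
  · refine Finsupp.lhom_ext fun p c => ?_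
    obtain ⟨j, ℓ⟩ := p
    rw [show (single (j, ℓ) c : ℤ × ℤ →₀ k) = c • single (j, ℓ) 1 by
      rw [smul_single, smul_eq_mul, mul_one]]
    simp only [LinearMap.sub_apply, LinearMap.comp_apply, LinearMap.zero_apply,
      map_sub, map_smul]
    rw [key1 j ℓ]
  · refine Finsupp.lhom_ext fun p c => ?_
    obtain ⟨j, ℓ⟩ := p
    rw [show (single (j, ℓ) c : ℤ × ℤ →₀ k) = c • single (j, ℓ) 1 by
      rw [smul_single, smul_eq_mul, mul_one]]
    simp only [LinearMap.sub_apply, LinearMap.comp_apply, LinearMap.zero_apply,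
      map_sub, map_smul]
    rw [key2 j ℓ]
end

section
/- Let n ≥ 3 be odd and let k be a field of characteristic zero. In sl_n, let E₁ = ∑_{j=1}^{n-2} ⌊(j+1)/2⌋ e_{j,j+2} and E₂ = e_{n,n-1} + e_{n-2,n-3} + ⋯ + e_{3,2}. Then [E₁,E₂] ≠ 0 and [[E₁,E₂],E₁] = [[E₁,E₂],E₂] = 0, so the Lie subalgebra of sl_n generated by E₁ and E₂ is a Heisenberg Lie algebra. -/
/-!
A matrix supported on the single diagonal `b = a + p` is determined by a coefficient function,
and the product of two such matrices lives on the diagonal of the summed shift. Hence `[E₁, E₂]`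
lives on the first superdiagonal, where at an even row `a` its entry is
`⌊(a + 2)/2⌋ - ⌊(a + 1)/2⌋ = 1`, and at an odd row it vanishes because `E₂` only has entries in
even rows. Since `n` is odd, an even row `a` with `a + 1 < n` also has `a + 2 < n`, so the border
of the matrix does not interfere. The resulting matrix `Z` commutes with `E₁` because
`⌊(a + 3)/2⌋ = ⌊(a + 2)/2⌋` for even `a`, and with `E₂` because the parities of their nonzero rows
never match in a product.
-/

open Matrix

namespace Matrix

variable {R : Type*} {n : ℕ}

def shiftDiagonal [Zero R] (n : ℕ) (p : ℤ) (f : ℤ → R) : Matrix (Fin n) (Fin n) R :=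
  of fun a b => if (b : ℤ) = a + p then f a else 0

theorem shiftDiagonal_congr [Zero R] {p : ℤ} {f g : ℤ → R}
    (h : ∀ a : ℤ, 0 ≤ a → a < n → 0 ≤ a + p → a + p < n → f a = g a) :
    shiftDiagonal n p f = shiftDiagonal n p g := by
  ext a b
  simp only [shiftDiagonal, of_apply]
  split_ifs with hab
  · exact h a (by omega) (by omega) (by omega) (by omega)
  · rfl

theorem shiftDiagonal_zero [Zero R] (p : ℤ) : shiftDiagonal n p (0 : ℤ → R) = 0 := by
  ext a b
  simp [shiftDiagonal]

theorem shiftDiagonal_sub [AddGroup R] (p : ℤ) (f g : ℤ → R) :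
    shiftDiagonal n p f - shiftDiagonal n p g = shiftDiagonal n p (f - g) := by
  ext a b
  simp only [shiftDiagonal, sub_apply, of_apply, Pi.sub_apply]
  split_ifs <;> simp

theorem shiftDiagonal_mul [NonUnitalNonAssocSemiring R] {p q r : ℤ} (hr : p + q = r)
    (f g : ℤ → R) :
    shiftDiagonal n p f * shiftDiagonal n q g =
      shiftDiagonal n r fun a => if 0 ≤ a + p ∧ a + p < n then f a * g (a + p) else 0 := by
  subst hr
  ext a b
  simp only [shiftDiagonal, mul_apply, of_apply, ite_mul, zero_mul, mul_ite, mul_zero]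
  by_cases hmid : 0 ≤ (a : ℤ) + p ∧ (a : ℤ) + p < n
  · obtain ⟨c, hc⟩ : ∃ c : Fin n, (c : ℤ) = a + p :=
      ⟨⟨(a + p).toNat, by omega⟩, Int.toNat_of_nonneg hmid.1⟩
    rw [Fintype.sum_eq_single c fun d hd => by
      simp [show (d : ℤ) ≠ a + p from fun h => hd (Fin.ext (by omega))]]
    simp [hc, hmid, add_assoc]
  · rw [Fintype.sum_eq_zero _ fun c => by
      simp [show (c : ℤ) ≠ a + p from fun h => hmid ⟨by omega, by omega⟩]]
    simp [hmid]

theorem shiftDiagonal_ne_zero [Zero R] {p : ℤ} {f : ℤ → R} {a : ℤ}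
    (ha : 0 ≤ a) (ha' : a < n) (hap : 0 ≤ a + p) (hap' : a + p < n) (hfa : f a ≠ 0) :
    shiftDiagonal n p f ≠ 0 := by
  intro h
  have := congrFun (congrFun h ⟨a.toNat, by omega⟩) ⟨(a + p).toNat, by omega⟩
  simp [shiftDiagonal, hfa, Int.toNat_of_nonneg ha, Int.toNat_of_nonneg hap] at this

end Matrix

section HeisenbergPair

variable (R : Type*) [Ring R] (n : ℕ)

def heisenbergE₁ : Matrix (Fin n) (Fin n) R :=
  shiftDiagonal n 2 fun a => (((a + 2) / 2 : ℤ) : R)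

def heisenbergE₂ : Matrix (Fin n) (Fin n) R :=
  shiftDiagonal n (-1) fun a => if Even a ∧ 2 ≤ a then 1 else 0

def heisenbergZ : Matrix (Fin n) (Fin n) R :=
  shiftDiagonal n 1 fun a => if Even a then 1 else 0

variable {R n}

theorem heisenbergE₁_eq_of : heisenbergE₁ R n = of fun a b : Fin n =>
    if (b : ℕ) = (a : ℕ) + 2 then ((((a : ℕ) + 2) / 2 : ℕ) : R) else 0 := by
  ext a b
  simp only [heisenbergE₁, shiftDiagonal, of_apply]
  congr 1
  · exact propext (by omega)
  · norm_cast

theorem heisenbergE₂_eq_of : heisenbergE₂ R n = of fun a b : Fin n =>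
    if (a : ℕ) = (b : ℕ) + 1 ∧ Even (a : ℕ) ∧ 2 ≤ (a : ℕ) then (1 : R) else 0 := by
  ext a b
  simp only [heisenbergE₂, shiftDiagonal, of_apply, Int.even_iff, Nat.even_iff]
  split_ifs <;> first | rfl | omega

theorem commutator_heisenbergE₁_E₂ (hodd : Odd n) :
    heisenbergE₁ R n * heisenbergE₂ R n - heisenbergE₂ R n * heisenbergE₁ R n =
      heisenbergZ R n := by
  obtain ⟨m, rfl⟩ := hodd
  rw [heisenbergE₁, heisenbergE₂, heisenbergZ, shiftDiagonal_mul (by norm_num : (2 : ℤ) + -1 = 1),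
    shiftDiagonal_mul (by norm_num : (-1 : ℤ) + 2 = 1), shiftDiagonal_sub]
  refine shiftDiagonal_congr fun a _ _ _ _ => ?_
  simp only [Pi.sub_apply, Int.even_iff]
  split_ifs <;> (try omega) <;> simp
  · rw [← Int.cast_sub, show (a + 2) / 2 - (a + -1 + 2) / 2 = 1 by omega, Int.cast_one]
  · rw [show (a + 2) / 2 = 1 by omega, Int.cast_one]

theorem commutator_heisenbergZ_E₁ :
    heisenbergZ R n * heisenbergE₁ R n - heisenbergE₁ R n * heisenbergZ R n = 0 := by
  rw [heisenbergE₁, heisenbergZ, shiftDiagonal_mul rfl,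
    shiftDiagonal_mul (add_comm 2 1), shiftDiagonal_sub, ← shiftDiagonal_zero (n := n)]
  refine shiftDiagonal_congr fun a _ _ _ _ => ?_
  simp only [Pi.sub_apply, Int.even_iff, Pi.zero_apply]
  split_ifs <;> (try omega) <;> simp
  rw [show (a + 1 + 2) / 2 = (a + 2) / 2 by omega, sub_self]

theorem commutator_heisenbergZ_E₂ :
    heisenbergZ R n * heisenbergE₂ R n - heisenbergE₂ R n * heisenbergZ R n = 0 := by
  rw [heisenbergE₂, heisenbergZ, shiftDiagonal_mul rfl,
    shiftDiagonal_mul (add_comm (-1) 1), shiftDiagonal_sub, ← shiftDiagonal_zero (n := n)]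
  refine shiftDiagonal_congr fun a _ _ _ _ => ?_
  simp only [Pi.sub_apply, Int.even_iff, Pi.zero_apply]
  split_ifs <;> (try omega) <;> simp

theorem heisenbergZ_ne_zero [Nontrivial R] (hn : 2 ≤ n) : heisenbergZ R n ≠ 0 :=
  shiftDiagonal_ne_zero (a := 0) le_rfl (by omega) (by omega) (by omega) (by simp)

end HeisenbergPair

theorem stmt_9_general (k : Type*) [Field k] (n : ℕ) (hn : 3 ≤ n)
    (hodd : Odd n)
    (E₁ E₂ : Matrix (Fin n) (Fin n) k)
    (hE₁ : E₁ = Matrix.of fun a b : Fin n =>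
      if (b : ℕ) = (a : ℕ) + 2 then ((((a : ℕ) + 2) / 2 : ℕ) : k) else 0)
    (hE₂ : E₂ = Matrix.of fun a b : Fin n =>
      if (a : ℕ) = (b : ℕ) + 1 ∧ Even (a : ℕ) ∧ 2 ≤ (a : ℕ) then (1 : k) else 0) :
    E₁ * E₂ - E₂ * E₁ ≠ 0 ∧
    (E₁ * E₂ - E₂ * E₁) * E₁ - E₁ * (E₁ * E₂ - E₂ * E₁) = 0 ∧
    (E₁ * E₂ - E₂ * E₁) * E₂ - E₂ * (E₁ * E₂ - E₂ * E₁) = 0 := by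
  rw [hE₁, hE₂, ← heisenbergE₁_eq_of, ← heisenbergE₂_eq_of, commutator_heisenbergE₁_E₂ hodd]
  exact ⟨heisenbergZ_ne_zero (by omega), commutator_heisenbergZ_E₁, commutator_heisenbergZ_E₂⟩

/-- Let n ≥ 3 be odd, k a field of characteristic zero. In sl_n let
E₁ = ∑_{j=1}^{n-2} ⌊(j+1)/2⌋ e_{j,j+2} and E₂ = e_{n,n-1} + e_{n-2,n-3} + ⋯ + e_{3,2}
(indices 1-based; below matrices are 0-indexed by `Fin n`, so E₁ has entry
⌊(a+2)/2⌋ at (a, a+2) and E₂ has entry 1 at (a, a-1) for even a ≥ 2).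
Then [E₁,E₂] ≠ 0 and [[E₁,E₂],E₁] = [[E₁,E₂],E₂] = 0, so the Lie subalgebra of
sl_n generated by E₁ and E₂ is a Heisenberg Lie algebra. -/
theorem stmt_9 (k : Type*) [Field k] [CharZero k] (n : ℕ) (hn : 3 ≤ n)
    (hodd : Odd n)
    (E₁ E₂ : Matrix (Fin n) (Fin n) k)
    (hE₁ : E₁ = Matrix.of fun a b : Fin n =>
      if (b : ℕ) = (a : ℕ) + 2 then ((((a : ℕ) + 2) / 2 : ℕ) : k) else 0)
    (hE₂ : E₂ = Matrix.of fun a b : Fin n =>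
      if (a : ℕ) = (b : ℕ) + 1 ∧ Even (a : ℕ) ∧ 2 ≤ (a : ℕ) then (1 : k) else 0) :
    E₁ * E₂ - E₂ * E₁ ≠ 0 ∧
    (E₁ * E₂ - E₂ * E₁) * E₁ - E₁ * (E₁ * E₂ - E₂ * E₁) = 0 ∧
    (E₁ * E₂ - E₂ * E₁) * E₂ - E₂ * (E₁ * E₂ - E₂ * E₁) = 0 :=
  stmt_9_general k n hn hodd E₁ E₂ hE₁ hE₂
end
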